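/- arXiv:1110.4777 — 5 statements merged into one kernel-verified Lean document; each statement's English description precedes it below -/
import Mathlib

section
/- Let Λ be a countable group and a : Λ × Λ → [0,∞) satisfy a(i,j) = a(ki,kj) for all i,j,k and ∑_i a(e,i) < ∞. Then there exists a metric d on Λ such that: (i) d(i,j) = d(ki,kj) for all i,j,k ∈ Λ; (ii) for every M < ∞ the ball {i ∈ Λ : d(e,i) ≤ M} is finite; and (iii) for every γ ≥ 0, ∑_i a(e,i) e^{γ d(e,i)} < ∞. -/
/-!
Choose finite sets `F n` exhausting `Λ` outside of which the total rate is at most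
`exp (-(n + 1) ^ 2)`, and let `N i` be the first `n` with `i ∈ F n`. The rate carried by
`{N = n + 1}` is then at most `exp (-(n + 1) ^ 2)`, which beats every `exp (γ n)`, so all
exponential moments of `N` are finite, and `N` has finite sublevel sets. The metric is the weighted
word metric `d i j = ‖i⁻¹ * j‖` in which a letter `s` costs `min (N s) (N s⁻¹) + 1`: it is
left-invariant by construction and bounded by `N + 1`, and its balls are finite because a word of
cost at most `M` has at most `M` letters, each from the finite set of letters of cost at most `M`.
-/

open Real

section WordLength

variable {G : Type*} [Group G] (w : G → ℕ)

noncomputable def wordLength (x : G) : ℕ :=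
  sInf {n | ∃ l : List G, l.prod = x ∧ (l.map w).sum = n}

theorem exists_prod_eq_and_sum_eq_wordLength (x : G) :
    ∃ l : List G, l.prod = x ∧ (l.map w).sum = wordLength w x :=
  Nat.sInf_mem (s := {n | ∃ l : List G, l.prod = x ∧ (l.map w).sum = n}) ⟨_, [x], by simp, rfl⟩

theorem wordLength_prod_le (l : List G) : wordLength w l.prod ≤ (l.map w).sum :=
  Nat.sInf_le ⟨l, rfl, rfl⟩

theorem wordLength_le_apply (x : G) : wordLength w x ≤ w x := by
  simpa using wordLength_prod_le w [x]

theorem wordLength_one : wordLength w 1 = 0 := by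
  simpa using wordLength_prod_le w []

theorem wordLength_mul_le (x y : G) : wordLength w (x * y) ≤ wordLength w x + wordLength w y := by
  obtain ⟨l₁, rfl, h₁⟩ := exists_prod_eq_and_sum_eq_wordLength w x
  obtain ⟨l₂, rfl, h₂⟩ := exists_prod_eq_and_sum_eq_wordLength w y
  simpa [h₁, h₂] using wordLength_prod_le w (l₁ ++ l₂)

variable {w}

theorem wordLength_inv_le (hw : ∀ s, w s⁻¹ = w s) (x : G) : wordLength w x⁻¹ ≤ wordLength w x := by
  obtain ⟨l, rfl, hl⟩ := exists_prod_eq_and_sum_eq_wordLength w x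
  rw [List.prod_inv_reverse, ← hl]
  simpa [Function.comp_def, hw] using wordLength_prod_le w (l.map (·⁻¹)).reverse

theorem wordLength_inv (hw : ∀ s, w s⁻¹ = w s) (x : G) : wordLength w x⁻¹ = wordLength w x :=
  (wordLength_inv_le hw x).antisymm (by simpa using wordLength_inv_le hw x⁻¹)

theorem eq_one_of_wordLength_eq_zero (hw : ∀ s, 0 < w s) {x : G} (hx : wordLength w x = 0) :
    x = 1 := by
  obtain ⟨l, rfl, hl⟩ := exists_prod_eq_and_sum_eq_wordLength w x
  rw [hx, List.sum_eq_zero_iff] at hl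
  cases l with
  | nil => rfl
  | cons s l => exact absurd (hl _ (List.mem_map_of_mem List.mem_cons_self)) (hw s).ne'

theorem finite_setOf_wordLength_le (hw : ∀ s, 0 < w s) (hfin : ∀ n, {s | w s ≤ n}.Finite) (n : ℕ) :
    {x | wordLength w x ≤ n}.Finite := by
  set A := {s | w s ≤ n}
  have := (hfin n).to_subtype
  refine ((List.finite_length_le A n).image fun l : List A => (l.map Subtype.val).prod).subset ?_
  intro x hx
  obtain ⟨l, rfl, hl⟩ := exists_prod_eq_and_sum_eq_wordLength w x
  have hsum : (l.map w).sum ≤ n := hl.trans_le hx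
  have hlen : l.length ≤ n := calc
    l.length = (l.map w).length := (List.length_map _).symm
    _ ≤ (l.map w).sum := List.length_le_sum_of_one_le _ 
      (List.forall_mem_map.2 fun s _ => hw s)
    _ ≤ n := hsum
  lift l to List A using fun s hs => (List.le_sum_of_mem (List.mem_map_of_mem hs)).trans hsum
  exact ⟨l, by simpa using hlen, rfl⟩

noncomputable def wordNorm (hw : ∀ s, 0 < w s) (hw_inv : ∀ s, w s⁻¹ = w s) : GroupNorm G where
  toFun x := wordLength w x
  map_one' := by simp [wordLength_one]
  mul_le' x y := mod_cast wordLength_mul_le w x y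
  inv' x := by simp [wordLength_inv hw_inv]
  eq_one_of_map_eq_zero' x hx := eq_one_of_wordLength_eq_zero hw (mod_cast hx)

@[simp]
theorem wordNorm_apply (hw : ∀ s, 0 < w s) (hw_inv : ∀ s, w s⁻¹ = w s) (x : G) :
    wordNorm hw hw_inv x = wordLength w x :=
  rfl

end WordLength

theorem summable_exp_mul_sub_sq (γ : ℝ) : Summable fun n : ℕ => exp (γ * n - n ^ 2) := by
  refine .of_nonneg_of_le (fun _ => (exp_pos _).le) (fun n => ?_)
    ((Real.summable_exp_nat_mul_iff.mpr neg_one_lt_zero).mul_left (exp ((γ + 1) ^ 2 / 4)))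
  rw [← exp_add, exp_le_exp]
  nlinarith [sq_nonneg ((n : ℝ) - (γ + 1) / 2)]

section Growth

variable {α : Type*} [Countable α]

theorem exists_cover_tsum_compl_le (b : α → ℝ) {ε : ℕ → ℝ} (hε : ∀ n, 0 < ε n) :
    ∃ F : ℕ → Finset α, (∀ i, ∃ n, i ∈ F n) ∧ ∀ n, ∑' i : {i // i ∉ F n}, b i ≤ ε n := by
  classical
  obtain ⟨f, hf⟩ := Countable.exists_injective_nat α
  have htail n := (tendsto_order.1 (tendsto_tsum_compl_atTop_zero b)).2 _ (hε n)
  choose S hS using fun n => Filter.eventually_atTop.1 (htail n)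
  refine ⟨fun n => S n ∪ (Set.finite_le_nat n |>.preimage hf.injOn).toFinset, fun i => ⟨f i, ?_⟩,
    fun n => (hS n _ Finset.subset_union_left).le⟩
  simp

theorem exists_finite_sublevel_summable_mul_exp {b : α → ℝ} (hb₀ : 0 ≤ b) (hb : Summable b) :
    ∃ N : α → ℕ, (∀ n, {i | N i ≤ n}.Finite) ∧
      ∀ γ : ℝ, Summable fun i => b i * exp (γ * N i) := by
  classical
  obtain ⟨F, hcover, htail⟩ := exists_cover_tsum_compl_le b (ε := fun n => exp (-(n + 1) ^ 2))
    fun _ => exp_pos _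
  let N i := Nat.find (hcover i)
  have hfiber n : {i | N i = n} ⊆ F n := fun i hi => hi ▸ Nat.find_spec (hcover i)
  refine ⟨N, fun n => ?_, fun γ => ?_⟩
  · refine ((Finset.range (n + 1)).biUnion F).finite_toSet.subset fun i hi => ?_
    simpa using ⟨N i, hi, Nat.find_spec (hcover i)⟩
  have hsummand : 0 ≤ fun i => b i * exp (γ * N i) := fun i => mul_nonneg (hb₀ i) (exp_pos _).le
  refine (summable_partition hsummand (s := fun n => {i | N i = n})
    fun i => ⟨N i, rfl, fun _ h => h.symm⟩).2 ⟨fun n => ?_, ?_⟩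
  · have : Finite {i | N i = n} := ((F n).finite_toSet.subset (hfiber n)).to_subtype
    exact .of_finite
  have htail' n : ∑' i : {i | N i = n + 1}, b i ≤ exp (-(n + 1) ^ 2) := by
    have hsub : {i | N i = n + 1} ⊆ {i | i ∉ F n} := fun i (hi : N i = n + 1) =>
      Nat.find_min (hcover i) (by omega : n < N i)
    refine le_trans ?_ (htail n)
    exact (hb.subtype _).tsum_le_tsum_of_inj (Set.inclusion hsub) (Set.inclusion_injective hsub)
      (fun _ _ => hb₀ _) (fun _ => le_rfl) (hb.subtype _)
  refine (summable_nat_add_iff 1).1 <| .of_nonneg_of_le (fun _ => tsum_nonneg fun _ => hsummand _)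
    (fun n => ?_) ((summable_nat_add_iff 1).2 (summable_exp_mul_sub_sq γ))
  calc ∑' i : {i | N i = n + 1}, b i * exp (γ * N i)
      = (∑' i : {i | N i = n + 1}, b i) * exp (γ * (n + 1)) := by
        rw [← tsum_mul_right]
        exact tsum_congr fun i => by rw [i.2]; push_cast; rfl
    _ ≤ exp (-(n + 1) ^ 2) * exp (γ * (n + 1)) := by gcongr; exact htail' n
    _ = exp (γ * (n + 1 : ℕ) - (n + 1 : ℕ) ^ 2) := by rw [← exp_add]; push_cast; ring_nf

end Growth

theorem GroupNorm.exists_finite_sublevel_le {G : Type*} [Group G] (N : G → ℕ)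
    (hN : ∀ n, {x | N x ≤ n}.Finite) :
    ∃ ν : GroupNorm G, (∀ M : ℝ, {x | ν x ≤ M}.Finite) ∧ ∀ x, ν x ≤ N x + 1 := by
  let w x := min (N x) (N x⁻¹) + 1
  have hw x : 0 < w x := Nat.succ_pos _
  have hw_inv x : w x⁻¹ = w x := by simp [w, min_comm]
  have hw_fin n : {x | w x ≤ n}.Finite := by
    refine ((hN n).union ((hN n).preimage inv_injective.injOn)).subset fun x hx => ?_
    simp only [Set.mem_ofPred_eq, w] at hx
    simp only [Set.mem_union, Set.mem_ofPred_eq, Set.mem_preimage]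
    omega
  refine ⟨wordNorm hw hw_inv, fun M => ?_, fun x => ?_⟩
  · exact (finite_setOf_wordLength_le hw hw_fin ⌊M⌋₊).subset fun x hx => Nat.le_floor hx
  · rw [wordNorm_apply]
    exact_mod_cast (wordLength_le_apply w x).trans (Nat.succ_le_succ (min_le_left _ _))

theorem stmt4_general {Λ : Type*} [Group Λ] [Countable Λ]
    (a : Λ → Λ → ℝ)
    (hnn : ∀ i j, 0 ≤ a i j)
    (hsum : Summable (fun i => a 1 i)) :
    ∃ d : Λ → Λ → ℝ,
      (∀ i j, 0 ≤ d i j) ∧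
      (∀ i j, d i j = 0 ↔ i = j) ∧
      (∀ i j, d i j = d j i) ∧
      (∀ i j k, d i k ≤ d i j + d j k) ∧
      (∀ i j k : Λ, d (k * i) (k * j) = d i j) ∧
      (∀ M : ℝ, {i : Λ | d 1 i ≤ M}.Finite) ∧
      (∀ γ : ℝ, 0 ≤ γ → Summable (fun i => a 1 i * Real.exp (γ * d 1 i))) := by
  obtain ⟨N, hN_fin, hN_sum⟩ := exists_finite_sublevel_summable_mul_exp (hnn 1) hsum
  obtain ⟨ν, hν_fin, hν_le⟩ := GroupNorm.exists_finite_sublevel_le N hN_fin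
  refine ⟨fun i j => ν (i⁻¹ * j), fun i j => apply_nonneg ν _,
    fun i j => by simp [map_eq_zero_iff_eq_one, inv_mul_eq_one],
    fun i j => by simpa using (map_inv_eq_map ν (i⁻¹ * j)).symm,
    fun i j k => by simpa [mul_assoc] using map_mul_le_add ν (i⁻¹ * j) (j⁻¹ * k),
    fun i j k => by simp [mul_assoc], fun M => by simpa using hν_fin M, fun γ hγ => ?_⟩
  refine .of_nonneg_of_le (fun i => mul_nonneg (hnn 1 i) (exp_pos _).le) (fun i => ?_)
    ((hN_sum γ).mul_left (exp γ))
  have hν_i : ν (1⁻¹ * i) ≤ N i + 1 := by simpa using hν_le i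
  calc a 1 i * exp (γ * ν (1⁻¹ * i)) ≤ a 1 i * exp (γ * (N i + 1)) :=
        mul_le_mul_of_nonneg_left (exp_le_exp.2 (mul_le_mul_of_nonneg_left hν_i hγ)) (hnn 1 i)
    _ = exp γ * (a 1 i * exp (γ * N i)) := by rw [mul_add, mul_one, exp_add]; ring

/-- Existence of a slowly growing left-invariant metric: given left-invariant infection
rates `a` with finite total rate, there is a left-invariant metric `d` on the countable
group `Λ` with finite balls and all exponential moments `∑_i a(e,i) e^{γ d(e,i)} < ∞`. -/
theorem stmt4 {Λ : Type*} [Group Λ] [Countable Λ]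
    (a : Λ → Λ → ℝ)
    (hnn : ∀ i j, 0 ≤ a i j)
    (hdiag : ∀ i, a i i = 0)
    (hinv : ∀ i j k : Λ, a (k * i) (k * j) = a i j)
    (hsum : Summable (fun i => a 1 i)) :
    ∃ d : Λ → Λ → ℝ,
      (∀ i j, 0 ≤ d i j) ∧
      (∀ i j, d i j = 0 ↔ i = j) ∧
      (∀ i j, d i j = d j i) ∧
      (∀ i j k, d i k ≤ d i j + d j k) ∧
      (∀ i j k : Λ, d (k * i) (k * j) = d i j) ∧
      (∀ M : ℝ, {i : Λ | d 1 i ≤ M}.Finite) ∧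
      (∀ γ : ℝ, 0 ≤ γ → Summable (fun i => a 1 i * Real.exp (γ * d 1 i))) :=
  stmt4_general a hnn hsum
end

section
/- Let Λ be countable and μ a measure on 𝒫₊(Λ) (nonempty subsets of Λ with the product topology). Then μ is locally finite (finite on compact sets) if and only if μ({A : i ∈ A}) < ∞ for every i ∈ Λ, and this in turn holds if and only if μ({A : A ∩ B ≠ ∅}) < ∞ for every finite nonempty B ⊆ Λ. -/
/-!
The cylinders `{A : i ∈ A}` are clopen, and compact because they are closed in the compact
space `{0,1}^Λ`; since every nonempty `A` lies in one of them, they form an open cover of `𝒫₊`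
by compact sets, and a measure is locally finite exactly when it is finite on the members of
such a cover.
-/

open MeasureTheory Set

theorem isLocallyFiniteMeasure_iff_of_isCompact_of_isOpen_cover {X ι : Type*}
    [TopologicalSpace X] [MeasurableSpace X] {μ : Measure X} {U : ι → Set X}
    (hcompact : ∀ i, IsCompact (U i)) (hopen : ∀ i, IsOpen (U i)) (hcover : ∀ x, ∃ i, x ∈ U i) :
    IsLocallyFiniteMeasure μ ↔ ∀ i, μ (U i) < ⊤ := by
  refine ⟨fun _ i ↦ (hcompact i).measure_lt_top, fun hfin ↦ ⟨fun x ↦ ?_⟩⟩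
  obtain ⟨i, hi⟩ := hcover x
  exact ⟨U i, (hopen i).mem_nhds hi, hfin i⟩

theorem forall_measure_lt_top_iff_forall_finset {α ι : Type*} [MeasurableSpace α]
    (μ : Measure α) (U : ι → Set α) :
    (∀ i, μ (U i) < ⊤) ↔ ∀ B : Finset ι, B.Nonempty → μ (⋃ i ∈ B, U i) < ⊤ := by
  refine ⟨fun h B _ ↦ measure_biUnion_lt_top B.finite_toSet fun i _ ↦ h i, fun h i ↦ ?_⟩
  refine (measure_mono ?_).trans_lt (h {i} (Finset.singleton_nonempty i))
  simp

section Cylinder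

variable {Λ : Type*} {p : (Λ → Bool) → Prop}

theorem isOpen_setOf_val_apply_eq_true (i : Λ) : IsOpen {χ : Subtype p | χ.1 i = true} :=
  (isOpen_discrete {true}).preimage (f := fun χ : Subtype p ↦ χ.1 i)
    ((continuous_apply i).comp continuous_subtype_val)

theorem isCompact_setOf_val_apply_eq_true {i : Λ} (hp : ∀ χ, χ i = true → p χ) :
    IsCompact {χ : Subtype p | χ.1 i = true} := by
  rw [Topology.IsEmbedding.subtypeVal.isCompact_iff]
  have himage : Subtype.val '' {χ : Subtype p | χ.1 i = true} = (fun χ ↦ χ i) ⁻¹' {true} := by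
    ext χ
    exact ⟨by rintro ⟨χ, hχ, rfl⟩; exact hχ, fun hχ ↦ ⟨⟨χ, hp χ hχ⟩, hχ, rfl⟩⟩
  rw [himage]
  exact (isClosed_singleton.preimage (continuous_apply i)).isCompact

end Cylinder

theorem stmt9_general {Λ : Type*}
    (μ : Measure {χ : Λ → Bool // ∃ i, χ i = true}) :
    (IsLocallyFiniteMeasure μ ↔ ∀ i : Λ, μ {χ | χ.1 i = true} < ⊤) ∧
    (IsLocallyFiniteMeasure μ ↔
      ∀ B : Finset Λ, B.Nonempty → μ {χ | ∃ i ∈ B, χ.1 i = true} < ⊤) := by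
  have hcylinders : IsLocallyFiniteMeasure μ ↔ ∀ i : Λ, μ {χ | χ.1 i = true} < ⊤ :=
    isLocallyFiniteMeasure_iff_of_isCompact_of_isOpen_cover
      (fun i ↦ isCompact_setOf_val_apply_eq_true fun χ hχ ↦ ⟨i, hχ⟩)
      isOpen_setOf_val_apply_eq_true (fun χ ↦ χ.2)
  refine ⟨hcylinders, hcylinders.trans ?_⟩
  convert forall_measure_lt_top_iff_forall_finset μ (fun i ↦ {χ | χ.1 i = true}) using 5
  ext χ
  simp

/-- Characterization of locally finite measures on the space `𝒫₊` of nonempty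
configurations: `μ` is locally finite iff `μ({A : i ∈ A}) < ∞` for every site `i`,
iff `μ({A : A ∩ B ≠ ∅}) < ∞` for every finite nonempty `B`. -/
theorem stmt9 {Λ : Type*} [Countable Λ]
    (μ : Measure {χ : Λ → Bool // ∃ i, χ i = true}) :
    (IsLocallyFiniteMeasure μ ↔ ∀ i : Λ, μ {χ | χ.1 i = true} < ⊤) ∧
    (IsLocallyFiniteMeasure μ ↔
      ∀ B : Finset Λ, B.Nonempty → μ {χ | ∃ i ∈ B, χ.1 i = true} < ⊤) :=
  stmt9_general μ
end

section
/- Let Λ be a countable group and μ a homogeneous (left-translation-invariant) measure on the finite nonempty subsets of Λ, obtained as μ = c ∑_{i∈Λ} P[iΔ ∈ ·] for a constant c > 0 and a random finite nonempty set Δ ⊆ Λ. If ν is a homogeneous locally finite measure on 𝒫₊ concentrated on finite nonempty sets, then h_ν(A) ≥ ⟨⟨ν⟩⟩ · |A| for all finite nonempty A, where ⟨⟨ν⟩⟩ := ∫ ν(dB) |B|^{-1} 1_{e ∈ B} and h_ν(A) := ν({B : A ∩ B ≠ ∅}). -/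
/-!
Sum the weights `|B|⁻¹ 1_{i ∈ B}` over `i ∈ A`. By homogeneity each weight has the same
integral `⟨⟨ν⟩⟩`, while pointwise the sum is `|A ∩ B| / |B| ≤ 1_{A ∩ B ≠ ∅}`.
-/

open MeasureTheory
open scoped ENNReal Classical Pointwise

section

variable {Λ : Type*}

noncomputable def invCardIndicator (i : Λ) (B : Set Λ) : ℝ≥0∞ :=
  if i ∈ B ∧ B.Finite then (B.ncard : ℝ≥0∞)⁻¹ else 0

theorem measurable_invCardIndicator [Countable Λ] (i : Λ) :
    Measurable (invCardIndicator i) :=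
  Measurable.ite ((measurableSet_mem i).inter MeasurableSet.setOfPred_finite)
    ((Measurable.of_discrete (f := fun n : ℕ => (n : ℝ≥0∞)⁻¹)).comp measurable_ncard)
    measurable_const

theorem invCardIndicator_smul [Group Λ] (j i : Λ) (B : Set Λ) :
    invCardIndicator (j * i) (j • B) = invCardIndicator i B := by
  simp only [invCardIndicator, ← smul_eq_mul, Set.smul_mem_smul_set_iff, Set.finite_smul_set,
    Set.ncard_smul_set]

theorem sum_invCardIndicator_le_one (A : Finset Λ) (B : Set Λ) :
    ∑ i ∈ A, invCardIndicator i B ≤ 1 := by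
  by_cases hB : B.Finite
  · have hcard : (A.filter (· ∈ B)).card ≤ B.ncard := by
      rw [← Set.ncard_coe_finset]
      exact Set.ncard_le_ncard (fun x hx => (Finset.mem_filter.1 hx).2) hB
    calc ∑ i ∈ A, invCardIndicator i B
        = (A.filter (· ∈ B)).card * (B.ncard : ℝ≥0∞)⁻¹ := by
          simp only [invCardIndicator, hB, and_true]
          rw [← Finset.sum_filter, Finset.sum_const, nsmul_eq_mul]
      _ ≤ B.ncard * (B.ncard : ℝ≥0∞)⁻¹ := by gcongr
      _ ≤ 1 := ENNReal.mul_inv_le_one _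
  · simp [invCardIndicator, hB]

theorem sum_invCardIndicator_le_indicator (A : Finset Λ) (B : Set Λ) :
    ∑ i ∈ A, invCardIndicator i B
      ≤ {B : Set Λ | ((A : Set Λ) ∩ B).Nonempty}.indicator (fun _ => 1) B := by
  by_cases hAB : ((A : Set Λ) ∩ B).Nonempty
  · simpa [hAB] using sum_invCardIndicator_le_one A B
  · refine (Finset.sum_eq_zero fun i (hi : i ∈ A) => ?_).trans_le zero_le
    have hiB : i ∉ B := fun hiB => hAB ⟨i, hi, hiB⟩
    simp [invCardIndicator, hiB]

theorem measurable_smul_set [Group Λ] (j : Λ) : Measurable fun B : Set Λ => j • B :=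
  measurable_set_iff.2 fun a => by
    simpa only [Set.mem_smul_set_iff_inv_smul_mem] using measurable_set_mem (j⁻¹ • a)

theorem lintegral_invCardIndicator_eq [Group Λ] [Countable Λ] {ν : Measure (Set Λ)}
    (hhom : ∀ i : Λ, ν.map (fun B : Set Λ => (i * ·) '' B) = ν) (i : Λ) :
    ∫⁻ B, invCardIndicator i B ∂ν = ∫⁻ B, invCardIndicator 1 B ∂ν := by
  have hhom_i : ν.map (fun B => i⁻¹ • B) = ν := hhom i⁻¹
  conv_rhs => rw [← hhom_i]
  rw [lintegral_map (measurable_invCardIndicator 1) (measurable_smul_set i⁻¹)]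
  exact lintegral_congr fun B => by simpa using (invCardIndicator_smul i⁻¹ i B).symm

end

theorem stmt12_general {Λ : Type*} [Group Λ] [Countable Λ]
    (ν : Measure (Set Λ))
    (hhom : ∀ i : Λ, ν.map (fun B : Set Λ => (i * ·) '' B) = ν) :
    ∀ A : Finset Λ, A.Nonempty →
      (A.card : ℝ≥0∞) *
          (∫⁻ B, (if (1 : Λ) ∈ B ∧ B.Finite then ((B.ncard : ℝ≥0∞))⁻¹ else 0) ∂ν)
        ≤ ν {B : Set Λ | ((A : Set Λ) ∩ B).Nonempty} := by
  intro A _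
  change (A.card : ℝ≥0∞) * ∫⁻ B, invCardIndicator 1 B ∂ν ≤ _
  calc (A.card : ℝ≥0∞) * ∫⁻ B, invCardIndicator 1 B ∂ν
      = ∑ i ∈ A, ∫⁻ B, invCardIndicator i B ∂ν := by
        simp [lintegral_invCardIndicator_eq hhom]
    _ = ∫⁻ B, ∑ i ∈ A, invCardIndicator i B ∂ν :=
        (lintegral_finsetSum _ fun i _ => measurable_invCardIndicator i).symm
    _ ≤ ∫⁻ B, {B : Set Λ | ((A : Set Λ) ∩ B).Nonempty}.indicator (fun _ => 1) B ∂ν :=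
        lintegral_mono (sum_invCardIndicator_le_indicator A)
    _ ≤ ν {B : Set Λ | ((A : Set Λ) ∩ B).Nonempty} := by
        simpa using lintegral_indicator_const_le _ (1 : ℝ≥0∞)

/-- Lower bound in the linear-bounds lemma: if `ν` is a homogeneous, locally finite
measure on the nonempty configurations that is concentrated on finite nonempty sets,
then `h_ν(A) ≥ ⟨⟨ν⟩⟩·|A|` for every finite nonempty `A`, where
`⟨⟨ν⟩⟩ = ∫ ν(dB) |B|⁻¹ 1_{e ∈ B}` (with `|B|⁻¹ := 0` for infinite `B`). -/
theorem stmt12 {Λ : Type*} [Group Λ] [Countable Λ]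
    (ν : Measure (Set Λ))
    (hfin : ∀ i : Λ, ν {B : Set Λ | i ∈ B} < ⊤)
    (hhom : ∀ i : Λ, ν.map (fun B : Set Λ => (i * ·) '' B) = ν)
    (hconc : ν {B : Set Λ | ¬ (B.Finite ∧ B.Nonempty)} = 0) :
    ∀ A : Finset Λ, A.Nonempty →
      (A.card : ℝ≥0∞) *
          (∫⁻ B, (if (1 : Λ) ∈ B ∧ B.Finite then ((B.ncard : ℝ≥0∞))⁻¹ else 0) ∂ν)
        ≤ ν {B : Set Λ | ((A : Set Λ) ∩ B).Nonempty} :=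
  stmt12_general ν hhom
end

section
/- Let Λ be a countable group and Δ a random finite nonempty subset of Λ with E[|Δ|] < ∞, and c > 0. Then μ := c ∑_{i∈Λ} P[iΔ ∈ ·] is a nonzero left-translation-invariant measure on the finite nonempty subsets of Λ satisfying ⟨⟨μ⟩⟩ := ∫ μ(dA) |A|^{-1} 1_{e∈A} = c, and μ({A : e ∈ A}) = c · E[|Δ|] < ∞. -/
open scoped ENNReal Classical Pointwise

/-!
Writing `μ A = c ∑ᵢ p (i • A)`, translation invariance of `μ` is a reindexing of the sum over `i`.
For the weighted sums over the sets containing the identity we use mass transport: substituting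
`B = i • A` turns `1 ∈ A` into `i ∈ B`, and exchanging the two sums every `B` is counted once for
each of its `#B` elements. With weight `1 / #A` this gives `c ∑_B p B = c`, with weight `1` it gives
`c · E[#Δ]`.
-/

namespace Finset

variable {Λ : Type*}

theorem card_mul_inv_card_mul {p : Finset Λ → ℝ≥0∞} (hne : ∀ A, p A ≠ 0 → A.Nonempty)
    (B : Finset Λ) : (#B : ℝ≥0∞) * ((#B : ℝ≥0∞)⁻¹ * p B) = p B := by
  by_cases hB : p B = 0
  · simp [hB]
  · exact ENNReal.mul_inv_cancel_left (by simpa using (hne B hB).ne_empty)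
      (ENNReal.natCast_ne_top _)

variable [DecidableEq Λ]

theorem tsum_tsum_ite_mem (f : Finset Λ → ℝ≥0∞) :
    ∑' (i : Λ) (B : Finset Λ), (if i ∈ B then f B else 0) = ∑' B : Finset Λ, #B * f B := by
  rw [ENNReal.tsum_comm]
  refine tsum_congr fun B => ?_
  rw [tsum_eq_sum (s := B) fun i hi => if_neg hi, sum_ite_mem, inter_self, sum_const,
    nsmul_eq_mul]

variable [Group Λ]

theorem image_mul_left_eq_smul (i : Λ) (A : Finset Λ) : A.image (i * ·) = i • A :=
  image_smul (a := i)

theorem tsum_ite_one_mem_smul (f : Finset Λ → ℝ≥0∞) (i : Λ) :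
    ∑' A : Finset Λ, (if (1 : Λ) ∈ A then f (i • A) else 0)
      = ∑' B : Finset Λ, if i ∈ B then f B else 0 := by
  have hmem : ∀ A : Finset Λ, (1 : Λ) ∈ A ↔ i ∈ i • A := fun A => by
    simpa using (smul_mem_smul_finset_iff (s := A) (b := (1 : Λ)) i).symm
  simp only [hmem]
  exact (MulAction.toPerm i).tsum_eq fun B => if i ∈ B then f B else 0

theorem tsum_ite_one_mem_mul_tsum_smul (p g : Finset Λ → ℝ≥0∞)
    (hg : ∀ (i : Λ) (A : Finset Λ), g (i • A) = g A) :
    ∑' A : Finset Λ, (if (1 : Λ) ∈ A then g A * ∑' i : Λ, p (i • A) else 0)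
      = ∑' B : Finset Λ, #B * (g B * p B) := by
  calc ∑' A : Finset Λ, (if (1 : Λ) ∈ A then g A * ∑' i : Λ, p (i • A) else 0)
      = ∑' (A : Finset Λ) (i : Λ), (if (1 : Λ) ∈ A then g (i • A) * p (i • A) else 0) := by
        refine tsum_congr fun A => ?_
        split_ifs
        · simp only [hg, ENNReal.tsum_mul_left]
        · simp
    _ = ∑' (i : Λ) (B : Finset Λ), (if i ∈ B then g B * p B else 0) := by
        rw [ENNReal.tsum_comm]
        exact tsum_congr fun i => tsum_ite_one_mem_smul (fun B => g B * p B) i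
    _ = ∑' B : Finset Λ, #B * (g B * p B) := tsum_tsum_ite_mem _

theorem tsum_smul_mul_right (p : Finset Λ → ℝ≥0∞) (j : Λ) (A : Finset Λ) :
    ∑' i : Λ, p (i • j • A) = ∑' i : Λ, p (i • A) := by
  simp only [smul_smul]
  exact (Equiv.mulRight j).tsum_eq fun i => p (i • A)

end Finset

open Finset

theorem stmt13_general {Λ : Type*} [Group Λ] [DecidableEq Λ]
    (p : Finset Λ → ℝ≥0∞)
    (hprob : ∑' A : Finset Λ, p A = 1)
    (hne : ∀ A : Finset Λ, p A ≠ 0 → A.Nonempty)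
    (hmom : ∑' A : Finset Λ, (A.card : ℝ≥0∞) * p A < ⊤)
    (c : ℝ≥0∞) (hc : 0 < c) (hc' : c ≠ ⊤)
    (μ : Finset Λ → ℝ≥0∞)
    (hμ : ∀ A : Finset Λ, μ A = c * ∑' i : Λ, p (A.image (i * ·))) :
    (∃ A : Finset Λ, μ A ≠ 0) ∧
    (∀ A : Finset Λ, μ A ≠ 0 → A.Nonempty) ∧
    (∀ (j : Λ) (A : Finset Λ), μ (A.image (j * ·)) = μ A) ∧
    (∑' A : Finset Λ, (if (1 : Λ) ∈ A then ((A.card : ℝ≥0∞))⁻¹ * μ A else 0) = c) ∧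
    (∑' A : Finset Λ, (if (1 : Λ) ∈ A then μ A else 0)
        = c * ∑' A : Finset Λ, (A.card : ℝ≥0∞) * p A) ∧
    (∑' A : Finset Λ, (if (1 : Λ) ∈ A then μ A else 0) < ⊤) := by
  simp only [image_mul_left_eq_smul] at hμ ⊢
  have transport : ∀ g : Finset Λ → ℝ≥0∞, (∀ (i : Λ) (A : Finset Λ), g (i • A) = g A) →
      ∑' A : Finset Λ, (if (1 : Λ) ∈ A then g A * μ A else 0)
        = c * ∑' B : Finset Λ, #B * (g B * p B) := fun g hg => by
    rw [← tsum_ite_one_mem_mul_tsum_smul p g hg, ← ENNReal.tsum_mul_left]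
    refine tsum_congr fun A => ?_
    split_ifs <;> simp only [hμ, mul_zero, mul_left_comm]
  have hmass : ∑' A : Finset Λ, (if (1 : Λ) ∈ A then μ A else 0)
      = c * ∑' A : Finset Λ, (#A : ℝ≥0∞) * p A := by
    simpa only [one_mul] using transport (fun _ => 1) fun _ _ => rfl
  refine ⟨?_, fun A hA => ?_, fun j A => ?_, ?_, hmass, ?_⟩
  · obtain ⟨A, hA⟩ : ∃ A, p A ≠ 0 := by
      by_contra! h
      simp [h] at hprob
    have hle : p A ≤ ∑' i : Λ, p (i • A) := by
      simpa using ENNReal.le_tsum (f := fun i : Λ => p (i • A)) 1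
    exact ⟨A, hμ A ▸ mul_ne_zero hc.ne' (ne_bot_of_le_ne_bot hA hle)⟩
  · by_contra hempty
    have hp : p ∅ = 0 := by_contra fun h => not_nonempty_empty (hne ∅ h)
    simp [not_nonempty_iff_eq_empty.mp hempty, hμ, hp] at hA
  · rw [hμ, hμ, tsum_smul_mul_right]
  · rw [transport (fun A => (#A : ℝ≥0∞)⁻¹) fun i A => by rw [card_smul_finset],
      tsum_congr (card_mul_inv_card_mul hne), hprob, mul_one]
  · rw [hmass]
    exact ENNReal.mul_lt_top hc'.lt_top hmom

/-- If `Δ` is a random finite nonempty subset of a countable group `Λ` with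
distribution `p` and `E[|Δ|] < ∞`, and `c > 0`, then
`μ(A) := c ∑_{i∈Λ} P[iΔ = A]` defines a nonzero left-translation-invariant measure
on the finite nonempty subsets of `Λ` with `⟨⟨μ⟩⟩ = c` and
`μ({A : e ∈ A}) = c · E[|Δ|] < ∞`. -/
theorem stmt13 {Λ : Type*} [Group Λ] [Countable Λ] [DecidableEq Λ]
    (p : Finset Λ → ℝ≥0∞)
    (hprob : ∑' A : Finset Λ, p A = 1)
    (hne : ∀ A : Finset Λ, p A ≠ 0 → A.Nonempty)
    (hmom : ∑' A : Finset Λ, (A.card : ℝ≥0∞) * p A < ⊤)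
    (c : ℝ≥0∞) (hc : 0 < c) (hc' : c ≠ ⊤)
    (μ : Finset Λ → ℝ≥0∞)
    (hμ : ∀ A : Finset Λ, μ A = c * ∑' i : Λ, p (A.image (i * ·))) :
    (∃ A : Finset Λ, μ A ≠ 0) ∧
    (∀ A : Finset Λ, μ A ≠ 0 → A.Nonempty) ∧
    (∀ (j : Λ) (A : Finset Λ), μ (A.image (j * ·)) = μ A) ∧
    (∑' A : Finset Λ, (if (1 : Λ) ∈ A then ((A.card : ℝ≥0∞))⁻¹ * μ A else 0) = c) ∧
    (∑' A : Finset Λ, (if (1 : Λ) ∈ A then μ A else 0)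
        = c * ∑' A : Finset Λ, (A.card : ℝ≥0∞) * p A) ∧
    (∑' A : Finset Λ, (if (1 : Λ) ∈ A then μ A else 0) < ⊤) :=
  stmt13_general p hprob hne hmom c hc hc' μ hμ
end

section
/- Let Λ be a countable group and let μ, ν be homogeneous locally finite measures on 𝒫₊(Λ), with μ concentrated on finite nonempty sets. Then ⟨⟨μ ∩⊗ ν⟩⟩ = ⟨⟨h_ν · μ⟩⟩, where ⟨⟨κ⟩⟩ := ∫ κ(dA) |A|^{-1} 1_{e∈A}, h_ν(A) := ν({B : A ∩ B ≠ ∅}), and h_ν·μ is the measure with density h_ν with respect to μ. -/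
/-!
Mass transport. Let `w j C = |C|⁻¹ 1_{j ∈ C}` for finite `C`; for finite nonempty `C` the masses
`w j C` sum to `1` over `j`. Splitting the weight `w e (A ∩ B)` as `∑ j, w j A * w e (A ∩ B)` and
using the diagonal invariance of `μ ⊗ ν`, the term sending mass from `j` to `e` has the same integral
as the one sending mass from `e` to `j⁻¹`. Summing over `j` gives
`∫ w e A * ∑ j, w j (A ∩ B) = ∫ w e A * 1_{A ∩ B ≠ ∅}`, and integrating out `B` gives `h_ν`.
-/

open MeasureTheory Set
open scoped ENNReal Pointwise Classical

section RandomSets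

variable {α : Type*}

lemma measurable_inter_prod : Measurable fun p : Set α × Set α => p.1 ∩ p.2 :=
  measurable_set_iff.2 fun a =>
    ((measurable_set_mem a).comp measurable_fst).and ((measurable_set_mem a).comp measurable_snd)

lemma measurableSet_setOf_nonempty [Countable α] : MeasurableSet {C : Set α | C.Nonempty} := by
  simp only [Set.Nonempty, ofPred_exists]
  exact MeasurableSet.iUnion fun a => measurableSet_setOfPred.2 (measurable_set_mem a)

lemma measurable_smul_set_s15 {G : Type*} [Group G] [MulAction G α] (g : G) :
    Measurable fun A : Set α => g • A :=
  measurable_set_iff.2 fun a => by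
    simp only [mem_smul_set_iff_inv_smul_mem]
    exact measurable_set_mem _

lemma sigmaFinite_of_measure_setOf_mem_lt_top [Countable α] {μ : Measure (Set α)}
    (hmem : ∀ a, μ {A | a ∈ A} < ∞) (hempty : μ {∅} < ∞) : SigmaFinite μ := by
  refine Measure.sigmaFinite_of_countable (S := insert {∅} (range fun a => {A : Set α | a ∈ A}))
    ((countable_range _).insert _) ?_ ?_
  · rintro s (rfl | ⟨a, rfl⟩)
    exacts [hempty, hmem a]
  · refine eq_univ_of_forall fun A => ?_
    rcases A.eq_empty_or_nonempty with rfl | ⟨a, ha⟩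
    · exact mem_sUnion.2 ⟨_, mem_insert _ _, rfl⟩
    · exact mem_sUnion.2 ⟨_, mem_insert_of_mem _ ⟨a, rfl⟩, ha⟩

end RandomSets

/-- The guard `C.Finite` matters: `ncard` of an infinite set is `0`, and `0⁻¹ = ∞` in `ℝ≥0∞`. -/
noncomputable def uniformMass {Λ : Type*} (j : Λ) (C : Set Λ) : ℝ≥0∞ :=
  if j ∈ C ∧ C.Finite then (C.ncard : ℝ≥0∞)⁻¹ else 0

section UniformMass

variable {Λ : Type*}

lemma uniformMass_of_infinite {C : Set Λ} (hC : C.Infinite) (j : Λ) : uniformMass j C = 0 :=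
  if_neg fun h => hC h.2

lemma tsum_uniformMass (C : Set Λ) :
    ∑' j, uniformMass j C = if C.Nonempty ∧ C.Finite then 1 else 0 := by
  rcases C.finite_or_infinite with hC | hC
  · have hsupp : ∀ j ∉ hC.toFinset, uniformMass j C = 0 := fun j hj =>
      if_neg fun h => hj (hC.mem_toFinset.2 h.1)
    have hconst : ∀ j ∈ hC.toFinset, uniformMass j C = (C.ncard : ℝ≥0∞)⁻¹ := fun j hj =>
      if_pos ⟨hC.mem_toFinset.1 hj, hC⟩
    rw [tsum_eq_sum hsupp, Finset.sum_congr rfl hconst, Finset.sum_const, nsmul_eq_mul,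
      ← ncard_eq_toFinset_card C hC]
    rcases C.eq_empty_or_nonempty with rfl | hne
    · simp
    · rw [if_pos ⟨hne, hC⟩]
      exact ENNReal.mul_inv_cancel (by exact_mod_cast ((ncard_pos hC).2 hne).ne')
        (ENNReal.natCast_ne_top _)
  · simp [uniformMass_of_infinite hC, hC]

lemma uniformMass_smul [Group Λ] (i a : Λ) (C : Set Λ) :
    uniformMass (i * a) (i • C) = uniformMass a C := by
  simp only [uniformMass, ← smul_eq_mul, smul_mem_smul_set_iff, finite_smul_set, ncard_smul_set]

lemma measurable_uniformMass [Countable Λ] (j : Λ) : Measurable (uniformMass j) := by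
  have hfin : {C : Set Λ | C.Finite}.Countable := Countable.ofPred_finite
  have := hfin.to_subtype
  refine measurable_of_restrict_of_restrict_compl hfin.measurableSet (measurable_of_countable _) ?_
  have hzero : {C : Set Λ | C.Finite}ᶜ.domRestrict (uniformMass j) = 0 := by
    ext ⟨C, hC⟩
    exact uniformMass_of_infinite hC j
  rw [hzero]
  exact measurable_const

lemma measurable_uniformMass_mul_inter [Countable Λ] (a b : Λ) :
    Measurable fun p : Set Λ × Set Λ => uniformMass a p.1 * uniformMass b (p.1 ∩ p.2) :=
  ((measurable_uniformMass a).comp measurable_fst).mul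
    ((measurable_uniformMass b).comp measurable_inter_prod)

end UniformMass

/-- Mass transport principle: `F a b x` is the mass sent from `a` to `b` in the configuration `x`. -/
theorem tsum_lintegral_mass_transport {Λ X : Type*} [Group Λ] [MulAction Λ X] [MeasurableSpace X]
    {ρ : Measure X} (hρ : ∀ i : Λ, MeasurePreserving (i • ·) ρ ρ) (F : Λ → Λ → X → ℝ≥0∞)
    (hF : ∀ a b, Measurable (F a b)) (hinv : ∀ i a b x, F (i * a) (i * b) (i • x) = F a b x) :
    ∑' j, ∫⁻ x, F 1 j x ∂ρ = ∑' j, ∫⁻ x, F j 1 x ∂ρ := by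
  have hshift : ∀ j, ∫⁻ x, F j 1 x ∂ρ = ∫⁻ x, F 1 j⁻¹ x ∂ρ := fun j => by
    rw [← (hρ j).lintegral_comp (hF j 1)]
    simpa only [mul_one, mul_inv_cancel] using lintegral_congr fun x => hinv j 1 j⁻¹ x
  rw [tsum_congr hshift]
  exact ((Equiv.inv Λ).tsum_eq fun j => ∫⁻ x, F 1 j x ∂ρ).symm

section Intersection

variable {Λ : Type*} [Countable Λ] {μ ν : Measure (Set Λ)}

lemma lintegral_uniformMass_inter_eq_tsum [SFinite ν] (hμ : ∀ᵐ A ∂μ, A.Nonempty ∧ A.Finite)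
    (a : Λ) :
    ∫⁻ p, uniformMass a (p.1 ∩ p.2) ∂μ.prod ν
      = ∑' j, ∫⁻ p, uniformMass j p.1 * uniformMass a (p.1 ∩ p.2) ∂μ.prod ν := by
  rw [← lintegral_tsum fun j => (measurable_uniformMass_mul_inter j a).aemeasurable]
  refine lintegral_congr_ae ?_
  filter_upwards [Measure.quasiMeasurePreserving_fst.ae hμ] with p hp
  rw [ENNReal.tsum_mul_right, tsum_uniformMass, if_pos hp, one_mul]

lemma tsum_lintegral_uniformMass_mul_inter [SFinite ν] (a : Λ) :
    ∑' j, ∫⁻ p, uniformMass a p.1 * uniformMass j (p.1 ∩ p.2) ∂μ.prod ν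
      = ∫⁻ A, uniformMass a A * ν {B | (A ∩ B).Nonempty} ∂μ := by
  have hpoint : ∀ p : Set Λ × Set Λ, ∑' j, uniformMass a p.1 * uniformMass j (p.1 ∩ p.2)
      = uniformMass a p.1 * {B | (p.1 ∩ B).Nonempty}.indicator 1 p.2 := fun ⟨A, B⟩ => by
    rw [ENNReal.tsum_mul_left, tsum_uniformMass]
    rcases A.finite_or_infinite with hA | hA
    · by_cases hAB : (A ∩ B).Nonempty
      · simp [hAB, hA.inter_of_left]
      · simp [hAB]
    · simp [uniformMass_of_infinite hA]
  rw [← lintegral_tsum fun j => (measurable_uniformMass_mul_inter a j).aemeasurable,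
    lintegral_congr hpoint, lintegral_prod _ ?meas]
  case meas =>
    exact ((measurable_uniformMass a).comp measurable_fst).mul
      (measurable_one.indicator (measurable_inter_prod measurableSet_setOf_nonempty)) |>.aemeasurable
  refine lintegral_congr fun A => ?_
  have hA : MeasurableSet {B : Set Λ | (A ∩ B).Nonempty} :=
    (measurable_inter_prod.comp (measurable_const.prodMk measurable_id)) measurableSet_setOf_nonempty
  dsimp only
  rw [lintegral_const_mul _ (measurable_one.indicator hA), lintegral_indicator_one hA]

end Intersection

/-- For homogeneous locally finite measures `μ, ν` on the nonempty configurations of a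
countable group, with `μ` concentrated on finite nonempty sets,
`⟨⟨μ ∩⊗ ν⟩⟩ = ⟨⟨h_ν · μ⟩⟩`, where `⟨⟨κ⟩⟩ = ∫ κ(dA) |A|⁻¹ 1_{e∈A}` (with `|A|⁻¹ := 0`
for infinite `A`) and `h_ν(A) = ν({B : A ∩ B ≠ ∅})`. -/
theorem stmt15 {Λ : Type*} [Group Λ] [Countable Λ]
    (μ ν : Measure (Set Λ))
    (hμfin : ∀ i : Λ, μ {A : Set Λ | i ∈ A} < ⊤)
    (hνfin : ∀ i : Λ, ν {B : Set Λ | i ∈ B} < ⊤)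
    (hμhom : ∀ i : Λ, μ.map (fun A : Set Λ => (i * ·) '' A) = μ)
    (hνhom : ∀ i : Λ, ν.map (fun B : Set Λ => (i * ·) '' B) = ν)
    (hμconc : μ {A : Set Λ | ¬ (A.Finite ∧ A.Nonempty)} = 0)
    (hνempty : ν {(∅ : Set Λ)} = 0) :
    (∫⁻ C, (if (1 : Λ) ∈ C ∧ C.Finite then ((C.ncard : ℝ≥0∞))⁻¹ else 0)
        ∂((μ.prod ν).map (fun p : Set Λ × Set Λ => p.1 ∩ p.2)))
      = ∫⁻ A, (if (1 : Λ) ∈ A ∧ A.Finite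
          then ((A.ncard : ℝ≥0∞))⁻¹ * ν {B : Set Λ | (A ∩ B).Nonempty} else 0) ∂μ := by
  have hμae : ∀ᵐ A ∂μ, A.Nonempty ∧ A.Finite := by
    simpa only [ae_iff, and_comm] using hμconc
  have : SigmaFinite μ := sigmaFinite_of_measure_setOf_mem_lt_top hμfin
    ((measure_mono_null (by simp) hμconc).trans_lt ENNReal.zero_lt_top)
  have : SigmaFinite ν := sigmaFinite_of_measure_setOf_mem_lt_top hνfin
    (hνempty.trans_lt ENNReal.zero_lt_top)
  have hρ : ∀ i : Λ, MeasurePreserving (i • ·) (μ.prod ν) (μ.prod ν) := fun i =>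
    (MeasurePreserving.mk (measurable_smul_set_s15 i) (hμhom i)).prod
      (MeasurePreserving.mk (measurable_smul_set_s15 i) (hνhom i))
  calc _ = ∫⁻ p, uniformMass 1 (p.1 ∩ p.2) ∂μ.prod ν :=
        lintegral_map (measurable_uniformMass 1) measurable_inter_prod
    _ = ∑' j, ∫⁻ p, uniformMass j p.1 * uniformMass 1 (p.1 ∩ p.2) ∂μ.prod ν :=
        lintegral_uniformMass_inter_eq_tsum hμae 1
    _ = ∑' j, ∫⁻ p, uniformMass 1 p.1 * uniformMass j (p.1 ∩ p.2) ∂μ.prod ν := by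
        refine (tsum_lintegral_mass_transport hρ _ measurable_uniformMass_mul_inter
          fun i a b p => ?_).symm
        simp only [Prod.smul_fst, Prod.smul_snd, ← smul_set_inter, uniformMass_smul]
    _ = ∫⁻ A, uniformMass 1 A * ν {B | (A ∩ B).Nonempty} ∂μ :=
        tsum_lintegral_uniformMass_mul_inter 1
    _ = _ := by simp only [uniformMass, ite_mul, zero_mul]
end
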